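/- Every finite connected simple graph that is triangle-free, contains no induced subgraph isomorphic to K1 ∪ P3 (the disjoint union of a vertex and a path on three vertices), and has maximum degree at least three, is a complete bipartite graph. -/
import Mathlib


open SimpleGraph

/-- `G` is `H`-free: no induced subgraph of `G` is isomorphic to `H`
(an induced copy is a graph embedding). -/
def InducedFree {α β : Type*} (H : SimpleGraph β) (G : SimpleGraph α) : Prop :=
  ¬ Nonempty (H ↪g G)

/-- `K1 ∪ P3`: a path `1-2-3` together with the isolated vertex `0`
(the complement of the paw). -/
def K1uP3 : SimpleGraph (Fin 4) := fromEdgeSet {s(1,2), s(2,3)}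

/-- `G` is a complete bipartite graph: there is a set `A` of vertices such that
two vertices are adjacent exactly when one lies in `A` and the other does not. -/
def IsCompleteBipartite {V : Type*} (G : SimpleGraph V) : Prop :=
  ∃ A : Set V, ∀ u v : V, G.Adj u v ↔ ((u ∈ A ∧ v ∉ A) ∨ (u ∉ A ∧ v ∈ A))

lemma adjK1uP3 (i j : Fin 4) : K1uP3.Adj i j ↔
    ((i=1∧j=2)∨(i=2∧j=1)∨(i=2∧j=3)∨(i=3∧j=2)) := by
  fin_cases i <;> fin_cases j <;> simp [K1uP3, Sym2.eq_iff]

/-- If `x-y-z` is an induced path and `w` is nonadjacent to all of them,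
we get an induced `K1 ∪ P3`. -/
lemma key_coPaw {V : Type*} (G : SimpleGraph V) (hK1uP3 : InducedFree K1uP3 G)
    (x y z w : V) (hxy : G.Adj x y) (hyz : G.Adj y z) (hxz : ¬G.Adj x z)
    (hxzne : x ≠ z) (hwx : ¬G.Adj w x) (hwy : ¬G.Adj w y) (hwz : ¬G.Adj w z) :
    False := by
  apply hK1uP3
  have hwx' : w ≠ x := fun h => hwy (h ▸ hxy)
  have hwy' : w ≠ y := fun h => hwx (h ▸ hxy.symm)
  have hwz' : w ≠ z := fun h => hwy (h ▸ hyz.symm)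
  have hxy' : x ≠ y := hxy.ne
  have hyz' : y ≠ z := hyz.ne
  have hxw : ¬G.Adj x w := fun h => hwx h.symm
  have hyw : ¬G.Adj y w := fun h => hwy h.symm
  have hzw : ¬G.Adj z w := fun h => hwz h.symm
  have hzx : ¬G.Adj z x := fun h => hxz h.symm
  have hyx : G.Adj y x := hxy.symm
  have hzy : G.Adj z y := hyz.symm
  refine ⟨⟨⟨![w, x, y, z], ?_⟩, ?_⟩⟩
  · intro i j hij
    fin_cases i <;> fin_cases j <;> simp at hij ⊢ <;> simp_all
  · intro i j
    fin_cases i <;> fin_cases j <;> simp [adjK1uP3] <;> assumption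

theorem triangle_free_coPaw_free_maxdeg_ge_three {V : Type*} [Fintype V]
    (G : SimpleGraph V) (hconn : G.Connected)
    (htf : G.CliqueFree 3) (hK1uP3 : InducedFree K1uP3 G)
    (hdeg : ∃ (v a b c : V), a ≠ b ∧ a ≠ c ∧ b ≠ c ∧
      G.Adj v a ∧ G.Adj v b ∧ G.Adj v c) :
    IsCompleteBipartite G := by
  classical
  obtain ⟨v, a, b, c, hab, hac, hbc, hva, hvb, hvc⟩ := hdeg
  have noTri : ∀ x y z : V, G.Adj x y → G.Adj x z → G.Adj y z → False := by
    intro x y z h1 h2 h3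
    exact htf {x, y, z} (is3Clique_triple_iff.mpr ⟨h1, h2, h3⟩)
  set A : Set V := {u | G.Adj v u} with hA
  have allAdj : ∀ u, u ≠ v → ¬G.Adj v u → ∀ x ∈ A, G.Adj u x := by
    intro u huv hvu x hx
    by_contra hux
    obtain ⟨p, q, hpq, hpx, hqx, hvp, hvq⟩ :
        ∃ p q : V, p ≠ q ∧ p ≠ x ∧ q ≠ x ∧ G.Adj v p ∧ G.Adj v q := by
      by_cases h1 : x = a
      · exact ⟨b, c, hbc, fun h => hab (h1 ▸ h).symm, fun h => hac (h1 ▸ h).symm, hvb, hvc⟩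
      · by_cases h2 : x = b
        · exact ⟨a, c, hac, fun h => h1 h.symm, fun h => hbc (h2 ▸ h).symm, hva, hvc⟩
        · exact ⟨a, b, hab, fun h => h1 h.symm, fun h => h2 h.symm, hva, hvb⟩
    have hxv : G.Adj x v := hx.symm
    have hxp : ¬G.Adj x p := fun h => noTri v x p hx hvp h
    have hxq : ¬G.Adj x q := fun h => noTri v x q hx hvq h
    have hpq' : ¬G.Adj p q := fun h => noTri v p q hvp hvq h
    have huv' : ¬G.Adj u v := fun h => hvu h.symm
    have hup : G.Adj u p := by
      by_contra hup
      exact key_coPaw G hK1uP3 x v p u hxv hvp hxp hpx.symm hux huv' hup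
    have huq : G.Adj u q := by
      by_contra huq
      exact key_coPaw G hK1uP3 x v q u hxv hvq hxq hqx.symm hux huv' huq
    have hxu : ¬G.Adj x u := fun h => hux h.symm
    exact key_coPaw G hK1uP3 p u q x hup.symm huq hpq' hpq hxp hxu hxq
  refine ⟨A, fun s t => ⟨?_, ?_⟩⟩
  · intro hst
    have hnb : ¬(s ∈ A ∧ t ∈ A) := fun ⟨h1, h2⟩ => noTri v s t h1 h2 hst
    have hno : ¬(s ∉ A ∧ t ∉ A) := by
      rintro ⟨h1, h2⟩
      have hsv : s ≠ v := fun h => h2 (show G.Adj v t from h ▸ hst)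
      have htv : t ≠ v := fun h => h1 (show G.Adj v s from h ▸ hst.symm)
      have haA : a ∈ A := hva
      have h3 : G.Adj s a := allAdj s hsv h1 a haA
      have h4 : G.Adj t a := allAdj t htv h2 a haA
      exact noTri s t a hst h3 h4
    tauto
  · rintro (⟨h1, h2⟩ | ⟨h1, h2⟩)
    · by_cases h : t = v
      · exact h ▸ (show G.Adj v s from h1).symm
      · exact (allAdj t h h2 s h1).symm
    · by_cases h : s = v
      · exact h ▸ (show G.Adj v t from h2)
      · exact allAdj s h h1 t h2
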